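/- arXiv:2007.15642 — 2 statements merged into one kernel-verified Lean document; each statement's English description precedes it below -/
import Mathlib

section
/- Let C₁ and C₂ be composable funnel CRNs with link species x. If the composition creates no fork on x, i.e., at most one reaction of the union C₁ ∪ C₂ has x as a reactant, then the composition C₁ ∪ C₂ is a funnel CRN. -/
/-- A chemical reaction over a type `σ` of species: reactant and product
multisets (given by their multiplicity functions) and a rate function. -/
structure Rxn (σ : Type*) where
  R : σ → ℕ
  P : σ → ℕ
  f : (σ → ℝ) → ℝ

/-- A chemical reaction network over species `σ`: a finite set (list) of
reactions. -/
abbrev CRN (σ : Type*) := List (Rxn σ)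

/-- The species appearing (as reactant or product) in a reaction. -/
def Rxn.species {σ : Type*} (r : Rxn σ) : Set σ :=
  {j | 0 < r.R j ∨ 0 < r.P j}

/-- The species appearing in the reactions of a CRN. -/
def speciesOf {σ : Type*} (C : CRN σ) : Set σ :=
  ⋃ r ∈ C, r.species

/-- Synthesis-free: every reaction consumes something (R ≰ P). -/
def SynthesisFree {σ : Type*} (C : CRN σ) : Prop :=
  ∀ r ∈ C, ∃ j, r.P j < r.R j

/-- Fork-free: each species is a reactant of at most one reaction. -/
def ForkFree {σ : Type*} (C : CRN σ) : Prop :=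
  ∀ j : σ, ∀ r ∈ C, ∀ r' ∈ C, 0 < r.R j → 0 < r'.R j → r = r'

/-- Directed edges of the bipartite reaction graph G_C. -/
def Edge {σ : Type*} (C : CRN σ) : (σ ⊕ Rxn σ) → (σ ⊕ Rxn σ) → Prop
  | Sum.inl j, Sum.inr r => r ∈ C ∧ 0 < r.R j
  | Sum.inr r, Sum.inl j => r ∈ C ∧ 0 < r.P j
  | _, _ => False

/-- Loop-free: the bipartite graph G_C has no directed cycle. -/
def LoopFree {σ : Type*} (C : CRN σ) : Prop :=
  ¬ ∃ v, Relation.TransGen (Edge C) v v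

/-- A funnel CRN is synthesis-free, loop-free and fork-free. -/
def Funnel {σ : Type*} (C : CRN σ) : Prop :=
  SynthesisFree C ∧ LoopFree C ∧ ForkFree C

/-- Two CRNs are composable with link `x` if `x` is the unique species
appearing in both. The composition is the union `C₁ ++ C₂`. -/
def Composable {σ : Type*} (C₁ C₂ : CRN σ) (x : σ) : Prop :=
  speciesOf C₁ ∩ speciesOf C₂ = {x}

section FunnelAux

variable {σ : Type*}

lemma mem_speciesOf_R {C : CRN σ} {r : Rxn σ} {j : σ} (hr : r ∈ C) (h : 0 < r.R j) :
    j ∈ speciesOf C :=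
  Set.mem_biUnion hr (Or.inl h)

lemma mem_speciesOf_P {C : CRN σ} {r : Rxn σ} {j : σ} (hr : r ∈ C) (h : 0 < r.P j) :
    j ∈ speciesOf C :=
  Set.mem_biUnion hr (Or.inr h)

lemma edge_classify {A B : CRN σ} {a b : σ ⊕ Rxn σ} (h : Edge (A ++ B) a b) :
    Edge A a b ∨ Edge B a b := by
  cases a with
  | inl j =>
    cases b with
    | inl j' => exact h.elim
    | inr r =>
      obtain ⟨hm, hR⟩ := h
      rcases List.mem_append.1 hm with hm | hm
      · exact Or.inl ⟨hm, hR⟩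
      · exact Or.inr ⟨hm, hR⟩
  | inr r =>
    cases b with
    | inl j' =>
      obtain ⟨hm, hP⟩ := h
      rcases List.mem_append.1 hm with hm | hm
      · exact Or.inl ⟨hm, hP⟩
      · exact Or.inr ⟨hm, hP⟩
    | inr _ => exact h.elim

/-- Propagation: a chain whose sources avoid `inl x`, whose first vertex is
entered by an `A`-edge, stays entirely in `A`. -/
lemma prop_lemma {A B C : CRN σ} {x : σ}
    (hx : ∀ j, j ∈ speciesOf A → j ∈ speciesOf B → j = x)
    (hC : ∀ r ∈ C, r ∈ A ∨ r ∈ B) :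
    ∀ u w, Relation.ReflTransGen (fun p q => Edge C p q ∧ p ≠ Sum.inl x) u w →
      ∀ v, Edge A v u → Relation.ReflTransGen (Edge A) u w := by
  intro u w h
  induction h using Relation.ReflTransGen.head_induction_on with
  | refl => intro v _; exact Relation.ReflTransGen.refl
  | head h' _ ih =>
    rename_i a c _
    intro v hv
    obtain ⟨he, hne⟩ := h'
    have hA : Edge A a c := by
      cases a with
      | inl j =>
        cases c with
        | inl _ => exact he.elim
        | inr r' =>
          obtain ⟨hr'C, hR⟩ := he
          rcases hC r' hr'C with hmA | hmB
          · exact ⟨hmA, hR⟩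
          · exfalso
            cases v with
            | inl _ => exact hv.elim
            | inr s =>
              obtain ⟨hsA, hP⟩ := hv
              exact hne (by rw [hx j (mem_speciesOf_P hsA hP) (mem_speciesOf_R hmB hR)])
      | inr r =>
        cases c with
        | inl j' =>
          obtain ⟨_, hP⟩ := he
          cases v with
          | inl j₀ =>
            obtain ⟨hrA, _⟩ := hv
            exact ⟨hrA, hP⟩
          | inr _ => exact hv.elim
        | inr _ => exact he.elim
    exact Relation.ReflTransGen.head hA (ih a hA)

/-- First-return decomposition of a cycle through `z`. -/
lemma L1 {α : Type*} {r : α → α → Prop} {z : α} :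
    ∀ {a b}, Relation.TransGen r a b → b = z →
      (∃ u, r z u ∧ Relation.ReflTransGen (fun p q => r p q ∧ p ≠ z) u z) ∨
      (a ≠ z ∧ Relation.TransGen (fun p q => r p q ∧ p ≠ z) a z) := by
  intro a b h
  induction h using Relation.TransGen.head_induction_on with
  | single h =>
    rename_i a'
    intro hb
    have h' : r a' z := hb ▸ h
    by_cases ha : a' = z
    · exact Or.inl ⟨z, ha ▸ h', Relation.ReflTransGen.refl⟩
    · exact Or.inr ⟨ha, Relation.TransGen.single ⟨h', ha⟩⟩
  | head h' hrest ih =>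
    rename_i a' c
    intro hb
    rcases ih hb with hl | ⟨hc, hF⟩
    · exact Or.inl hl
    · by_cases ha : a' = z
      · exact Or.inl ⟨c, ha ▸ h', hF.to_reflTransGen⟩
      · exact Or.inr ⟨ha, hF.head ⟨h', ha⟩⟩

lemma L2 {α : Type*} {r : α → α → Prop} {z : α} :
    ∀ {a b}, Relation.TransGen r a b → a ≠ z →
      Relation.TransGen (fun p q => r p q ∧ p ≠ z) a b ∨
      (Relation.TransGen r a z ∧ Relation.TransGen r z b) := by
  intro a b h
  induction h using Relation.TransGen.head_induction_on with
  | single h =>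
    intro ha
    exact Or.inl (Relation.TransGen.single ⟨h, ha⟩)
  | head h' hrest ih =>
    rename_i a' c
    intro ha
    by_cases hc : c = z
    · exact Or.inr ⟨Relation.TransGen.single (hc ▸ h'), hc ▸ hrest⟩
    · rcases ih hc with hF | ⟨h1, h2⟩
      · exact Or.inl (hF.head ⟨h', ha⟩)
      · exact Or.inr ⟨h1.head h', h2⟩

/-- Any cycle admits a decomposition: some edge `w → u` followed by a chain
back to `w` whose sources all avoid `z`. -/
lemma cycle_decomp {α : Type*} (r : α → α → Prop) (z : α) {v : α}
    (h : Relation.TransGen r v v) :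
    ∃ w u, r w u ∧ Relation.ReflTransGen (fun p q => r p q ∧ p ≠ z) u w := by
  by_cases hz : Relation.TransGen r z z
  · rcases L1 hz rfl with ⟨u, h1, h2⟩ | ⟨hne, _⟩
    · exact ⟨z, u, h1, h2⟩
    · exact absurd rfl hne
  · have hv : v ≠ z := by rintro rfl; exact hz h
    rcases L2 h hv with hF | ⟨h1, h2⟩
    · obtain ⟨u, h1, h2⟩ := Relation.TransGen.head'_iff.1 hF
      exact ⟨v, u, h1.1, h2⟩
    · exact absurd (h2.trans h1) hz

end FunnelAux

/-- The composition of two composable funnel CRNs is a funnel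
CRN provided the composition creates no fork on the link: at most one reaction
of the union has the link as a reactant. -/
theorem funnel_composition {σ : Type*} (C₁ C₂ : CRN σ) (x : σ)
    (h₁ : Funnel C₁) (h₂ : Funnel C₂) (hcomp : Composable C₁ C₂ x)
    (hnofork : ∀ r ∈ C₁ ++ C₂, ∀ r' ∈ C₁ ++ C₂,
      0 < r.R x → 0 < r'.R x → r = r') :
    Funnel (C₁ ++ C₂) := by
  have hx : ∀ j, j ∈ speciesOf C₁ → j ∈ speciesOf C₂ → j = x := by
    intro j h1 h2
    have : j ∈ speciesOf C₁ ∩ speciesOf C₂ := ⟨h1, h2⟩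
    rw [hcomp] at this
    exact this
  refine ⟨?_, ?_, ?_⟩
  · intro r hr
    rcases List.mem_append.1 hr with hm | hm
    · exact h₁.1 r hm
    · exact h₂.1 r hm
  · rintro ⟨v, hv⟩
    obtain ⟨w, u, hwu, hchain⟩ := cycle_decomp (Edge (C₁ ++ C₂)) (Sum.inl x) hv
    rcases edge_classify hwu with hA | hB
    · have := prop_lemma (A := C₁) (B := C₂) hx (fun r hr => List.mem_append.1 hr)
        u w hchain w hA
      exact h₁.2.1 ⟨w, Relation.TransGen.head' hA this⟩
    · have hx' : ∀ j, j ∈ speciesOf C₂ → j ∈ speciesOf C₁ → j = x :=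
        fun j h1 h2 => hx j h2 h1
      have := prop_lemma (A := C₂) (B := C₁) hx'
        (fun r hr => (List.mem_append.1 hr).symm) u w hchain w hB
      exact h₂.2.1 ⟨w, Relation.TransGen.head' hB this⟩
  · intro j r hr r' hr' hRr hRr'
    rcases List.mem_append.1 hr with hm | hm <;> rcases List.mem_append.1 hr' with hm' | hm'
    · exact h₁.2.2 j r hm r' hm' hRr hRr'
    · have hj : j = x := hx j (mem_speciesOf_R hm hRr) (mem_speciesOf_R hm' hRr')
      subst hj
      exact hnofork r hr r' hr' hRr hRr'
    · have hj : j = x := hx j (mem_speciesOf_R hm' hRr') (mem_speciesOf_R hm hRr)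
      subst hj
      exact hnofork r hr r' hr' hRr hRr'
    · exact h₂.2.2 j r hm r' hm' hRr hRr'
end

section
/- Let C₁ and C₂ be composable funnel CRNs with link species x. If x occurs as a reactant in at most one of the two CRNs (i.e., x is not a reactant of any reaction of at least one of C₁, C₂), then the composition C₁ ∪ C₂ is a funnel CRN. -/
lemma mem_speciesOf {σ : Type*} {C : CRN σ} {r : Rxn σ} (hr : r ∈ C) {j : σ}
    (h : 0 < r.R j ∨ 0 < r.P j) : j ∈ speciesOf C := by
  simp only [speciesOf, Set.mem_iUnion]
  exact ⟨r, hr, h⟩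

lemma edge_congr {σ : Type*} {C C' : CRN σ} (h : ∀ r, r ∈ C ↔ r ∈ C') :
    Edge C = Edge C' := by
  funext u v
  cases u <;> cases v <;> simp [Edge, h _]

lemma funnel_congr {σ : Type*} {C C' : CRN σ} (h : ∀ r, r ∈ C ↔ r ∈ C') :
    Funnel C → Funnel C' := fun ⟨hs, hl, hf⟩ =>
  ⟨fun r hr => hs r ((h r).mpr hr),
   by rw [LoopFree, ← edge_congr h]; exact hl,
   fun j r hr r' hr' => hf j r ((h r).mpr hr) r' ((h r').mpr hr')⟩

lemma funnel_comp_aux {σ : Type*} (C₁ C₂ : CRN σ) (x : σ)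
    (h₁ : Funnel C₁) (h₂ : Funnel C₂) (hcomp : Composable C₁ C₂ x)
    (hlink : ∀ r ∈ C₂, r.R x = 0) : Funnel (C₁ ++ C₂) := by
  obtain ⟨hs₁, hl₁, hf₁⟩ := h₁
  obtain ⟨hs₂, hl₂, hf₂⟩ := h₂
  have hx : ∀ j, j ∈ speciesOf C₁ → j ∈ speciesOf C₂ → j = x := by
    intro j hj1 hj2
    have : j ∈ ({x} : Set σ) := hcomp ▸ ⟨hj1, hj2⟩
    exact this
  have nocommon : ∀ r, r ∈ C₁ → r ∈ C₂ → False := by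
    intro r hr1 hr2
    obtain ⟨j, hj⟩ := hs₁ r hr1
    have hRj : 0 < r.R j := lt_of_le_of_lt (Nat.zero_le _) hj
    have hjx := hx j (mem_speciesOf hr1 (Or.inl hRj)) (mem_speciesOf hr2 (Or.inl hRj))
    subst hjx
    have := hlink r hr2
    omega
  refine ⟨?_, ?_, ?_⟩
  · intro r hr
    rcases List.mem_append.mp hr with h | h
    · exact hs₁ r h
    · exact hs₂ r h
  · -- LoopFree
    set S : (σ ⊕ Rxn σ) → Prop := Sum.elim (· ∈ speciesOf C₁) (· ∈ C₁) with hS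
    have lemA : ∀ u v, Edge (C₁ ++ C₂) u v → S u → Edge C₁ u v ∧ S v := by
      intro u v h hu
      match u, v with
      | Sum.inl j, Sum.inr r =>
        obtain ⟨hm, hR⟩ := h
        rcases List.mem_append.mp hm with hm | hm
        · exact ⟨⟨hm, hR⟩, hm⟩
        · exfalso
          have hjx := hx j hu (mem_speciesOf hm (Or.inl hR))
          subst hjx
          have := hlink r hm
          omega
      | Sum.inr r, Sum.inl j =>
        obtain ⟨hm, hP⟩ := h
        exact ⟨⟨hu, hP⟩, mem_speciesOf hu (Or.inr hP)⟩
      | Sum.inl _, Sum.inl _ => exact absurd h not_false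
      | Sum.inr _, Sum.inr _ => exact absurd h not_false
    have lemB : ∀ u v, Edge (C₁ ++ C₂) u v → ¬ S u → Edge C₂ u v := by
      intro u v h hu
      match u, v with
      | Sum.inl j, Sum.inr r =>
        obtain ⟨hm, hR⟩ := h
        rcases List.mem_append.mp hm with hm | hm
        · exact absurd (mem_speciesOf hm (Or.inl hR)) hu
        · exact ⟨hm, hR⟩
      | Sum.inr r, Sum.inl j =>
        obtain ⟨hm, hP⟩ := h
        rcases List.mem_append.mp hm with hm | hm
        · exact absurd hm hu
        · exact ⟨hm, hP⟩
      | Sum.inl _, Sum.inl _ => exact absurd h not_false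
      | Sum.inr _, Sum.inr _ => exact absurd h not_false
    have L1 : ∀ a b, Relation.TransGen (Edge (C₁ ++ C₂)) a b → S a →
        S b ∧ Relation.TransGen (Edge C₁) a b := by
      intro a b h ha
      induction h with
      | single h => exact ⟨(lemA _ _ h ha).2, Relation.TransGen.single (lemA _ _ h ha).1⟩
      | tail _ h ih =>
        obtain ⟨hSb, htg⟩ := ih
        exact ⟨(lemA _ _ h hSb).2, htg.tail (lemA _ _ h hSb).1⟩
    have L2 : ∀ a b, Relation.TransGen (Edge (C₁ ++ C₂)) a b → ¬ S a →
        S b ∨ Relation.TransGen (Edge C₂) a b := by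
      intro a b h ha
      induction h with
      | @single b h =>
        by_cases hb : S b
        · exact Or.inl hb
        · exact Or.inr (Relation.TransGen.single (lemB _ _ h ha))
      | @tail b' c h1 h ih =>
        by_cases hb : S b'
        · exact Or.inl (lemA _ _ h hb).2
        · rcases ih with hSb | htg
          · exact absurd hSb hb
          · by_cases hc : S c
            · exact Or.inl hc
            · exact Or.inr (htg.tail (lemB _ _ h hb))
    rintro ⟨v, hv⟩
    by_cases hVS : S v
    · exact hl₁ ⟨v, (L1 _ _ hv hVS).2⟩
    · rcases L2 _ _ hv hVS with h | h
      · exact hVS (L1 _ _ hv h).1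
      · exact hl₂ ⟨v, h⟩
  · -- ForkFree
    intro j r hr r' hr' hR hR'
    rcases List.mem_append.mp hr with h | h <;> rcases List.mem_append.mp hr' with h' | h'
    · exact hf₁ j r h r' h' hR hR'
    · exfalso
      have hjx := hx j (mem_speciesOf h (Or.inl hR)) (mem_speciesOf h' (Or.inl hR'))
      subst hjx
      have := hlink r' h'
      omega
    · exfalso
      have hjx := hx j (mem_speciesOf h' (Or.inl hR')) (mem_speciesOf h (Or.inl hR))
      subst hjx
      have := hlink r h
      omega
    · exact hf₂ j r h r' h' hR hR'

/-- The composition of two composable funnel CRNs is a funnel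
CRN provided the link is a reactant in at most one of the two CRNs. -/
theorem funnel_composition_link_reactant_once {σ : Type*} (C₁ C₂ : CRN σ)
    (x : σ) (h₁ : Funnel C₁) (h₂ : Funnel C₂) (hcomp : Composable C₁ C₂ x)
    (hlink : (∀ r ∈ C₁, r.R x = 0) ∨ (∀ r ∈ C₂, r.R x = 0)) :
    Funnel (C₁ ++ C₂) := by
  rcases hlink with h | h
  · have hcomp' : Composable C₂ C₁ x := by
      unfold Composable at *
      rw [Set.inter_comm]
      exact hcomp
    have := funnel_comp_aux C₂ C₁ x h₂ h₁ hcomp' h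
    exact funnel_congr (fun r => by simp [or_comm]) this
  · exact funnel_comp_aux C₁ C₂ x h₁ h₂ hcomp h
end
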